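/- The function H ↦ ρ(H) = (-3^{2H} + 2^{2H+2} - 7)/(8 - 2^{2H+1}) is strictly monotone increasing on (0,1). -/

import Mathlib

/-! With `w = 4 ^ H` and `c = logb 4 9 > 1` one has `3 ^ (2 * H) = w ^ c` and `9 = 4 ^ c`, so
`ρ(H) + 2` is half the slope of the secant of the strictly convex function `w ↦ w ^ c` between `w`
and `4`. Such slopes increase with `w`, and `w` increases with `H`. -/

open Real Set

noncomputable def rhoH (H : ℝ) : ℝ :=
  (-(3:ℝ)^(2*H) + 4*(4:ℝ)^H - 7) / (8 - 2*(4:ℝ)^H)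

theorem StrictConvexOn.strictMonoOn_secant {𝕜 : Type*} [Field 𝕜] [LinearOrder 𝕜]
    [IsStrictOrderedRing 𝕜] {s : Set 𝕜} {f : 𝕜 → 𝕜} (hf : StrictConvexOn 𝕜 s f) {a : 𝕜}
    (ha : a ∈ s) : StrictMonoOn (fun x ↦ (f x - f a) / (x - a)) (s \ {a}) :=
  fun _ hx _ hy hxy ↦ hf.secant_strict_mono ha hx.1 hy.1 hx.2 hy.2 hxy

lemma one_lt_logb_four_nine : 1 < logb 4 9 := by
  rw [lt_logb_iff_rpow_lt (by norm_num) (by norm_num)]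
  norm_num

lemma three_rpow_two_mul (H : ℝ) : (3:ℝ) ^ (2 * H) = ((4:ℝ) ^ H) ^ logb 4 9 := by
  calc (3:ℝ) ^ (2 * H) = ((4:ℝ) ^ logb 4 9) ^ H := by
        rw [rpow_mul (by norm_num), rpow_logb (by norm_num) (by norm_num) (by norm_num)]
        norm_num
    _ = ((4:ℝ) ^ H) ^ logb 4 9 := by rw [← rpow_mul (by norm_num), mul_comm, rpow_mul (by norm_num)]

lemma rhoH_eq_secant {H : ℝ} (hH : (4:ℝ) ^ H ≠ 4) :
    rhoH H = (((4:ℝ) ^ H) ^ logb 4 9 - (4:ℝ) ^ logb 4 9) / ((4:ℝ) ^ H - 4) / 2 - 2 := by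
  rw [rhoH, three_rpow_two_mul, rpow_logb (by norm_num) (by norm_num) (by norm_num)]
  generalize (4:ℝ) ^ H = w at hH ⊢
  have hw : w - 4 ≠ 0 := sub_ne_zero.2 hH
  have hden : 8 - 2 * w ≠ 0 := by contrapose! hw; linarith
  rw [div_div, eq_sub_iff_add_eq, div_add' _ _ _ hden, div_eq_div_iff hden (mul_ne_zero hw two_ne_zero)]
  ring

theorem rho_strictMonoOn : StrictMonoOn rhoH (Set.Ioo (0:ℝ) 1) := by
  have hsecant := (strictConvexOn_rpow one_lt_logb_four_nine).strictMonoOn_secant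
    (show (4:ℝ) ∈ Ici 0 by norm_num)
  have hpow : ∀ H ∈ Ioo (0:ℝ) 1, (4:ℝ) ^ H ∈ Ici 0 \ {4} := fun H hH ↦
    ⟨(rpow_pos_of_pos (by norm_num) H).le,
      (rpow_lt_rpow_of_exponent_lt (by norm_num) hH.2).trans_eq (rpow_one 4) |>.ne⟩
  intro x hx y hy hxy
  rw [rhoH_eq_secant (hpow x hx).2, rhoH_eq_secant (hpow y hy).2]
  have hslope := hsecant (hpow x hx) (hpow y hy) (rpow_lt_rpow_of_exponent_lt (by norm_num) hxy)
  dsimp only at hslope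
  linarith
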